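/- Let g, h, l be real vector spaces, {,} : h × h → l a bilinear map, ⟨,⟩_h a bilinear form on h, ⟨,⟩_l a bilinear form on l, and η₁, η₂ : l × h → h bilinear maps satisfying ⟨{Y, Y'}, Z⟩_l = − ⟨Y', η₁(Z, Y)⟩_h = − ⟨Y, η₂(Z, Y')⟩_h for all Y, Y' ∈ h, Z ∈ l. Define η̄ᵢ(C, B) := C ∧^{ηᵢ} B, the wedge via ηᵢ. Then for a real vector space V and alternating multilinear maps B₁ : V^{t₁} → h, B₂ : V^{t₂} → h, C : V^q → l, one has ⟨B₁ ∧^{{,}} B₂, C⟩ = (−1)^{t₁(t₂ + q) + 1} ⟨B₂, η̄₁(C, B₁)⟩ = (−1)^{t₂ q + 1} ⟨B₁, η̄₂(C, B₂)⟩ as alternating (t₁+t₂+q)-linear maps V^{t₁+t₂+q} → ℝ. -/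

import Mathlib

/-! Antisymmetrizing the plain product `v ↦ μ (A (v₁, …, v_k)) (B (v_{k+1}, …, v_{k+l}))` of two
forms gives the `μ`-wedge of their antisymmetrizations, because every permutation of `Fin (k + l)`
is uniquely a shuffle followed by a permutation of each block. On an alternating `k`-form
antisymmetrization is multiplication by `k!`, so `t₁! t₂! q!` times either side of each identity
is the antisymmetrization of a product of three forms. The hypothesis on `ηᵢ` says that the two
triple products agree up to a sign `-1` once the arguments are permuted by a block exchange, of sign
`(-1)^(t₁ (t₂ + q))` for `η₁` and `(-1)^(t₂ q)` for `η₂`; antisymmetrization turns this into the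
stated signs. -/

/-- A (k, l)-shuffle: a permutation of `Fin (k + l)` that is strictly increasing on the
first `k` indices and on the last `l` indices. -/
def IsShuffle (k l : ℕ) (σ : Equiv.Perm (Fin (k + l))) : Prop :=
  (∀ i j : Fin k, i < j → σ (Fin.castAdd l i) < σ (Fin.castAdd l j)) ∧
  (∀ i j : Fin l, i < j → σ (Fin.natAdd k i) < σ (Fin.natAdd k j))

instance (k l : ℕ) (σ : Equiv.Perm (Fin (k + l))) : Decidable (IsShuffle k l σ) := by
  unfold IsShuffle; infer_instance

/-- The wedge product, via a bilinear pairing `μ : E → F → W`, of a `k`-form `A` and an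
`l`-form `B` (given as functions on tuples of vectors):
`(A ∧^μ B)(v) = Σ_σ sgn(σ) μ(A(v_{σ(1)},…,v_{σ(k)}), B(v_{σ(k+1)},…,v_{σ(k+l)}))`,
the sum ranging over `(k, l)`-shuffles `σ`. -/
def wedge {V E F W : Type*} [AddCommGroup W]
    (μ : E → F → W) {k l : ℕ}
    (A : (Fin k → V) → E) (B : (Fin l → V) → F) :
    (Fin (k + l) → V) → W :=
  fun v => ∑ σ : Equiv.Perm (Fin (k + l)),
    if IsShuffle k l σ then
      (Equiv.Perm.sign σ : ℤ) •
        μ (A fun i => v (σ (Fin.castAdd l i))) (B fun i => v (σ (Fin.natAdd k i)))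
    else 0

/-- Identify `m`-forms with `n`-forms along an equality `m = n` of arities. -/
def reindex {V W : Type*} {m n : ℕ} (h : m = n) (f : (Fin m → V) → W) :
    (Fin n → V) → W :=
  fun v => f fun i => v (Fin.cast h i)



open Equiv Equiv.Perm Finset

section Shuffle

variable {k l : ℕ}

def blockPerm (e : Perm (Fin k)) (f : Perm (Fin l)) : Perm (Fin (k + l)) :=
  finSumFinEquiv.permCongr (e.sumCongr f)

@[simp] lemma blockPerm_castAdd (e : Perm (Fin k)) (f : Perm (Fin l)) (i : Fin k) :
    blockPerm e f (Fin.castAdd l i) = Fin.castAdd l (e i) := by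
  simp [blockPerm, permCongr_apply]

@[simp] lemma blockPerm_natAdd (e : Perm (Fin k)) (f : Perm (Fin l)) (i : Fin l) :
    blockPerm e f (Fin.natAdd k i) = Fin.natAdd k (f i) := by
  simp [blockPerm, permCongr_apply]

lemma blockPerm_mul_blockPerm (e e' : Perm (Fin k)) (f f' : Perm (Fin l)) :
    blockPerm e f * blockPerm e' f' = blockPerm (e * e') (f * f') := by
  simp [blockPerm, ← permCongr_mul, sumCongr_mul]

@[simp] lemma blockPerm_one : blockPerm (1 : Perm (Fin k)) (1 : Perm (Fin l)) = 1 := by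
  ext x : 1
  simp [blockPerm, permCongr_apply]

@[simp] lemma sign_blockPerm (e : Perm (Fin k)) (f : Perm (Fin l)) :
    sign (blockPerm e f) = sign e * sign f := by
  simp [blockPerm, sign_permCongr, sign_sumCongr]

lemma val_blockPerm (e : Perm (Fin k)) (f : Perm (Fin l)) (x : Fin (k + l)) :
    (blockPerm e f x : ℕ) =
      if h : (x : ℕ) < k then (e ⟨x, h⟩ : ℕ) else k + f ⟨x - k, by omega⟩ := by
  induction x using Fin.addCases with
  | left i => simp
  | right j => simp

lemma Tuple.sort_comp_perm_of_strictMono {n : ℕ} {α : Type*} [LinearOrder α] {g : Fin n → α}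
    (hg : StrictMono g) (e : Perm (Fin n)) : Tuple.sort (g ∘ e) = e⁻¹ := by
  refine (Tuple.eq_sort_iff.2 ⟨?_, fun i j hij hgij => ?_⟩).symm
  · simpa [Function.comp_assoc] using hg.monotone
  · simp only [Perm.coe_inv, Function.comp_apply, apply_symm_apply] at hgij
    exact absurd (hg.injective hgij) hij.ne

lemma Tuple.strictMono_comp_sort {n : ℕ} {α : Type*} [LinearOrder α] {g : Fin n → α}
    (hg : Function.Injective g) : StrictMono (g ∘ Tuple.sort g) :=
  (Tuple.monotone_sort g).strictMono_of_injective (hg.comp (Tuple.sort g).injective)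

lemma isShuffle_iff (σ : Perm (Fin (k + l))) :
    IsShuffle k l σ ↔ StrictMono (σ ∘ Fin.castAdd l) ∧ StrictMono (σ ∘ Fin.natAdd k) :=
  Iff.rfl

lemma mul_blockPerm_comp_castAdd (σ : Perm (Fin (k + l))) (e : Perm (Fin k)) (f : Perm (Fin l)) :
    ⇑(σ * blockPerm e f) ∘ Fin.castAdd l = ⇑σ ∘ Fin.castAdd l ∘ ⇑e := by
  ext i : 1; simp

lemma mul_blockPerm_comp_natAdd (σ : Perm (Fin (k + l))) (e : Perm (Fin k)) (f : Perm (Fin l)) :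
    ⇑(σ * blockPerm e f) ∘ Fin.natAdd k = ⇑σ ∘ Fin.natAdd k ∘ ⇑f := by
  ext i : 1; simp

noncomputable def shuffleBlockEquiv :
    {σ // IsShuffle k l σ} × Perm (Fin k) × Perm (Fin l) ≃ Perm (Fin (k + l)) where
  toFun x := x.1 * blockPerm x.2.1 x.2.2
  invFun π :=
    (⟨π * blockPerm (Tuple.sort (π ∘ Fin.castAdd l)) (Tuple.sort (π ∘ Fin.natAdd k)), by
      rw [isShuffle_iff, mul_blockPerm_comp_castAdd, mul_blockPerm_comp_natAdd]
      exact ⟨Tuple.strictMono_comp_sort (π.injective.comp (Fin.castAdd_injective k l)),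
        Tuple.strictMono_comp_sort (π.injective.comp (Fin.natAdd_injective l k))⟩⟩,
      (Tuple.sort (π ∘ Fin.castAdd l))⁻¹, (Tuple.sort (π ∘ Fin.natAdd k))⁻¹)
  left_inv := by
    rintro ⟨⟨σ, hσ⟩, e, f⟩
    rw [isShuffle_iff] at hσ
    simp only [mul_blockPerm_comp_castAdd, mul_blockPerm_comp_natAdd, ← Function.comp_assoc,
      Tuple.sort_comp_perm_of_strictMono hσ.1, Tuple.sort_comp_perm_of_strictMono hσ.2, inv_inv,
      mul_assoc, blockPerm_mul_blockPerm, mul_inv_cancel, blockPerm_one, mul_one]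
  right_inv π := by
    simp only [mul_assoc, blockPerm_mul_blockPerm, mul_inv_cancel, blockPerm_one, mul_one]

lemma sum_perm_eq_sum_shuffle {M : Type*} [AddCommMonoid M] (φ : Perm (Fin (k + l)) → M) :
    ∑ π, φ π = ∑ σ : Perm (Fin (k + l)), if IsShuffle k l σ then
      ∑ e : Perm (Fin k), ∑ f : Perm (Fin l), φ (σ * blockPerm e f) else 0 := by
  rw [← Finset.sum_filter, ← Finset.sum_subtype_eq_sum_filter, Finset.subtype_univ,
    ← Fintype.sum_equiv shuffleBlockEquiv _ φ fun _ => rfl]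
  simp only [Fintype.sum_prod_type]
  rfl

end Shuffle

section Alternatize

variable {R V E F G W : Type*} [CommRing R]
  [AddCommGroup E] [Module R E] [AddCommGroup F] [Module R F]
  [AddCommGroup G] [Module R G] [AddCommGroup W] [Module R W]

def alternatize {n : ℕ} (f : (Fin n → V) → E) : (Fin n → V) → E :=
  fun v => ∑ π : Perm (Fin n), (sign π : ℤ) • f (v ∘ π)

def tensor (μ : E → F → W) {k l : ℕ} (A : (Fin k → V) → E) (B : (Fin l → V) → F) :
    (Fin (k + l) → V) → W :=
  fun v => μ (A (v ∘ Fin.castAdd l)) (B (v ∘ Fin.natAdd k))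

lemma alternatize_comp_perm {n : ℕ} (f : (Fin n → V) → E) (ρ : Perm (Fin n)) :
    alternatize (fun v => f (v ∘ ρ)) = (sign ρ : ℤ) • alternatize f := by
  ext v
  simp only [alternatize, Pi.smul_apply, Finset.smul_sum, smul_smul]
  refine Fintype.sum_equiv (Equiv.mulRight ρ) _ _ fun π => ?_
  simp only [coe_mulRight, map_mul, Units.val_mul, coe_mul, Function.comp_assoc]
  congr 1
  rw [mul_left_comm, ← Units.val_mul, Int.units_mul_self, Units.val_one, mul_one]

lemma alternatize_reindex {m n : ℕ} (h : m = n) (f : (Fin m → V) → E) :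
    alternatize (reindex h f) = reindex h (alternatize f) := by
  subst h
  rfl

lemma alternatize_zsmul {n : ℕ} (s : ℤ) (f : (Fin n → V) → E) :
    alternatize (s • f) = s • alternatize f := by
  ext v
  simp [alternatize, Finset.smul_sum, smul_comm s]

lemma reindex_symm_apply_comp_cast {X : Type*} {m n : ℕ} (h : m = n) (f : (Fin n → V) → X)
    (v : Fin n → V) : reindex h.symm f (v ∘ Fin.cast h) = f v := by
  subst h
  rfl

lemma wedge_nsmul_left (μ : E →ₗ[R] F →ₗ[R] W) {k l : ℕ} (c : ℕ) (A : (Fin k → V) → E)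
    (B : (Fin l → V) → F) :
    wedge (fun x y => μ x y) (c • A) B = c • wedge (fun x y => μ x y) A B := by
  ext v
  simp [wedge, Finset.smul_sum, smul_comm c]

lemma wedge_nsmul_right (μ : E →ₗ[R] F →ₗ[R] W) {k l : ℕ} (c : ℕ) (A : (Fin k → V) → E)
    (B : (Fin l → V) → F) :
    wedge (fun x y => μ x y) A (c • B) = c • wedge (fun x y => μ x y) A B := by
  ext v
  simp [wedge, Finset.smul_sum, smul_comm c]

lemma alternatize_tensor (μ : E →ₗ[R] F →ₗ[R] W) {k l : ℕ} (A : (Fin k → V) → E)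
    (B : (Fin l → V) → F) :
    alternatize (tensor (fun x y => μ x y) A B) =
      wedge (fun x y => μ x y) (alternatize A) (alternatize B) := by
  ext v
  rw [alternatize, sum_perm_eq_sum_shuffle]
  refine Finset.sum_congr rfl fun σ _ => ?_
  split_ifs
  · simp only [tensor, alternatize, map_sum, LinearMap.sum_apply, map_zsmul, LinearMap.smul_apply,
      Finset.smul_sum, smul_smul, Function.comp_assoc, mul_blockPerm_comp_castAdd,
      mul_blockPerm_comp_natAdd, map_mul, sign_blockPerm, Units.val_mul]
    refine Finset.sum_comm.trans
      (Finset.sum_congr rfl fun f _ => Finset.sum_congr rfl fun e _ => ?_)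
    congr 1
    ring
  · rfl

variable [AddCommGroup V] [Module R V]

lemma alternatize_alternatingMap {n : ℕ} (A : AlternatingMap R V E (Fin n)) :
    alternatize ⇑A = n.factorial • ⇑A := by
  ext v
  simp [alternatize, AlternatingMap.map_perm, Units.smul_def, smul_smul, ← Units.val_mul,
    Fintype.card_perm]

end Alternatize

section TripleWedge

variable {R V E F G H W : Type*} [CommRing R] [AddCommGroup V] [Module R V]
  [AddCommGroup E] [Module R E] [AddCommGroup F] [Module R F]
  [AddCommGroup G] [Module R G] [AddCommGroup H] [Module R H] [AddCommGroup W] [Module R W]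
  {a b c : ℕ}

lemma alternatize_tensor_tensor_left (ν : E →ₗ[R] F →ₗ[R] H) (μ : H →ₗ[R] G →ₗ[R] W)
    (A : AlternatingMap R V E (Fin a)) (B : AlternatingMap R V F (Fin b))
    (C : AlternatingMap R V G (Fin c)) :
    alternatize (tensor (fun x y => μ x y) (tensor (fun x y => ν x y) ⇑A ⇑B) ⇑C) =
      (a.factorial * b.factorial * c.factorial) •
        wedge (fun x y => μ x y) (wedge (fun x y => ν x y) ⇑A ⇑B) ⇑C := by
  simp only [alternatize_tensor, alternatize_alternatingMap, wedge_nsmul_left, wedge_nsmul_right,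
    smul_smul]
  congr 1
  ring

lemma alternatize_tensor_tensor_right (ν : F →ₗ[R] G →ₗ[R] H) (μ : E →ₗ[R] H →ₗ[R] W)
    (A : AlternatingMap R V E (Fin a)) (B : AlternatingMap R V F (Fin b))
    (C : AlternatingMap R V G (Fin c)) :
    alternatize (tensor (fun x y => μ x y) ⇑A (tensor (fun x y => ν x y) ⇑B ⇑C)) =
      (a.factorial * b.factorial * c.factorial) •
        wedge (fun x y => μ x y) ⇑A (wedge (fun x y => ν x y) ⇑B ⇑C) := by
  simp only [alternatize_tensor, alternatize_alternatingMap, wedge_nsmul_left, wedge_nsmul_right,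
    smul_smul]
  congr 1
  ring

end TripleWedge

lemma wedge_wedge_eq_smul_reindex_of_tensor_eq {𝕜 V E₁ E₂ E₃ H E₁' E₂' E₃' H' W : Type*}
    [Field 𝕜] [CharZero 𝕜] [AddCommGroup V] [Module 𝕜 V] [AddCommGroup E₁] [Module 𝕜 E₁]
    [AddCommGroup E₂] [Module 𝕜 E₂] [AddCommGroup E₃] [Module 𝕜 E₃] [AddCommGroup H] [Module 𝕜 H]
    [AddCommGroup E₁'] [Module 𝕜 E₁'] [AddCommGroup E₂'] [Module 𝕜 E₂'] [AddCommGroup E₃']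
    [Module 𝕜 E₃'] [AddCommGroup H'] [Module 𝕜 H'] [AddCommGroup W] [Module 𝕜 W]
    {a b c a' b' c' : ℕ} (ν : E₁ →ₗ[𝕜] E₂ →ₗ[𝕜] H) (μ : H →ₗ[𝕜] E₃ →ₗ[𝕜] W)
    (A : AlternatingMap 𝕜 V E₁ (Fin a)) (B : AlternatingMap 𝕜 V E₂ (Fin b))
    (C : AlternatingMap 𝕜 V E₃ (Fin c))
    (ν' : E₂' →ₗ[𝕜] E₃' →ₗ[𝕜] H') (μ' : E₁' →ₗ[𝕜] H' →ₗ[𝕜] W)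
    (A' : AlternatingMap 𝕜 V E₁' (Fin a')) (B' : AlternatingMap 𝕜 V E₂' (Fin b'))
    (C' : AlternatingMap 𝕜 V E₃' (Fin c'))
    (h : a' + (b' + c') = a + b + c)
    (hfact : a'.factorial * b'.factorial * c'.factorial = a.factorial * b.factorial * c.factorial)
    (ρ : Perm (Fin (a' + (b' + c')))) (s : ℤˣ)
    (hρ : ∀ w, tensor (fun x y => μ' x y) ⇑A' (tensor (fun x y => ν' x y) ⇑B' ⇑C') w =
      (s : ℤ) • tensor (fun x y => μ x y) (tensor (fun x y => ν x y) ⇑A ⇑B) ⇑C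
        (w ∘ ρ ∘ Fin.cast h.symm)) :
    wedge (fun x y => μ x y) (wedge (fun x y => ν x y) ⇑A ⇑B) ⇑C =
      (((s * sign ρ : ℤˣ) : ℤ) : 𝕜) •
        reindex h (wedge (fun x y => μ' x y) ⇑A' (wedge (fun x y => ν' x y) ⇑B' ⇑C')) := by
  have key := calc
    alternatize (tensor (fun x y => μ' x y) ⇑A' (tensor (fun x y => ν' x y) ⇑B' ⇑C'))
      = alternatize ((s : ℤ) • fun w => reindex h.symm
          (tensor (fun x y => μ x y) (tensor (fun x y => ν x y) ⇑A ⇑B) ⇑C) (w ∘ ρ)) :=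
        congrArg alternatize (funext hρ)
    _ = ((s * sign ρ : ℤˣ) : ℤ) • reindex h.symm
          (alternatize (tensor (fun x y => μ x y) (tensor (fun x y => ν x y) ⇑A ⇑B) ⇑C)) := by
        rw [alternatize_zsmul, alternatize_comp_perm, alternatize_reindex, smul_smul, Units.val_mul]
  rw [alternatize_tensor_tensor_right, alternatize_tensor_tensor_left, hfact] at key
  ext v
  have hv := congrFun key (v ∘ Fin.cast h)
  simp only [Pi.smul_apply, reindex_symm_apply_comp_cast] at hv
  have hK : ((a.factorial * b.factorial * c.factorial : ℕ) : 𝕜) ≠ 0 :=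
    Nat.cast_ne_zero.2 (by positivity)
  apply smul_right_injective W hK
  simp only [Nat.cast_smul_eq_nsmul, Pi.smul_apply, Int.cast_smul_eq_zsmul]
  change _ = _ • _ • wedge _ _ _ (v ∘ Fin.cast h)
  rw [smul_comm (_ : ℕ), hv, smul_smul, ← Units.val_mul, Int.units_mul_self, Units.val_one,
    one_smul]

section FinRotate

lemma val_finRotate_pow {n : ℕ} (x : Fin n) (k : ℕ) :
    ((finRotate n ^ k) x : ℕ) = (x + k) % n := by
  induction k with
  | zero => simp [Nat.mod_eq_of_lt x.isLt]
  | succ k ih =>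
    rcases n with _ | n
    · exact x.elim0
    · rw [pow_succ', Perm.mul_apply, finRotate_apply, Fin.add_def, ih, Fin.val_one',
        ← Nat.add_assoc, Nat.add_mod (x + k) 1]

lemma val_finRotate_pow_of_le {n k : ℕ} (hk : k ≤ n) (x : Fin n) :
    ((finRotate n ^ k) x : ℕ) = if (x : ℕ) + k < n then x + k else x + k - n := by
  rw [val_finRotate_pow]
  split_ifs with hlt
  · exact Nat.mod_eq_of_lt hlt
  · rw [Nat.mod_eq_sub_mod (by omega), Nat.mod_eq_of_lt (by omega)]

lemma sign_finRotate_pow {m n N : ℕ} (h : m + n = N) :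
    sign (finRotate N ^ n) = (-1) ^ (m * n) := by
  subst h
  rw [map_pow, sign_finRotate, ← pow_mul]
  rcases n with _ | n
  · simp
  · rw [show (m + (n + 1) - 1) * (n + 1) = m * (n + 1) + n * (n + 1) by
      rw [Nat.add_succ_sub_one]; ring, pow_add, (Nat.even_mul_succ_self n).neg_one_pow, mul_one]

end FinRotate

section EtaBar

variable {R h l V W : Type*} [CommRing R] [AddCommGroup h] [Module R h] [AddCommGroup l]
  [Module R l] [AddCommGroup V] [Module R V] [AddCommGroup W] [Module R W]
  (P : h →ₗ[R] h →ₗ[R] l) (innh : h →ₗ[R] h →ₗ[R] W) (innl : l →ₗ[R] l →ₗ[R] W)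
  {t₁ t₂ q : ℕ} (B₁ : AlternatingMap R V h (Fin t₁)) (B₂ : AlternatingMap R V h (Fin t₂))
  (C : AlternatingMap R V l (Fin q))

/-- `finRotate _ ^ (t₂ + q)` carries the slots of the layout `B₁ | B₂ | C` to the slots they
occupy in `B₂ | C | B₁`. -/
lemma tensor_inner_eta₁_eq_neg_tensor_bracket (η₁ : l →ₗ[R] h →ₗ[R] h)
    (hη₁ : ∀ (Y Y' : h) (Z : l), innl (P Y Y') Z = - innh Y' (η₁ Z Y))
    (hN : t₂ + (q + t₁) = t₁ + t₂ + q) (w : Fin (t₂ + (q + t₁)) → V) :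
    tensor (fun x y => innh x y) ⇑B₂ (tensor (fun x y => η₁ x y) ⇑C ⇑B₁) w =
      ((-1 : ℤˣ) : ℤ) • tensor (fun x y => innl x y) (tensor (fun x y => P x y) ⇑B₁ ⇑B₂) ⇑C
        (w ∘ ⇑(finRotate _ ^ (t₂ + q)) ∘ Fin.cast hN.symm) := by
  have hk : t₂ + q ≤ t₂ + (q + t₁) := by omega
  simp only [tensor, Function.comp_def, hη₁, Units.val_neg, Units.val_one, neg_smul, one_smul,
    neg_neg]
  congr! with i <;> rw [Fin.ext_iff] <;>
    simp only [Fin.val_castAdd, Fin.val_natAdd, Fin.val_cast, val_finRotate_pow_of_le hk] <;>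
    split_ifs <;> omega

/-- `blockPerm 1 (finRotate _ ^ q)` carries the slots of the layout `B₁ | B₂ | C` to the slots
they occupy in `B₁ | C | B₂`. -/
lemma tensor_inner_eta₂_eq_neg_tensor_bracket (η₂ : l →ₗ[R] h →ₗ[R] h)
    (hη₂ : ∀ (Y Y' : h) (Z : l), innl (P Y Y') Z = - innh Y (η₂ Z Y'))
    (hN : t₁ + (q + t₂) = t₁ + t₂ + q) (w : Fin (t₁ + (q + t₂)) → V) :
    tensor (fun x y => innh x y) ⇑B₁ (tensor (fun x y => η₂ x y) ⇑C ⇑B₂) w =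
      ((-1 : ℤˣ) : ℤ) • tensor (fun x y => innl x y) (tensor (fun x y => P x y) ⇑B₁ ⇑B₂) ⇑C
        (w ∘ ⇑(blockPerm 1 (finRotate _ ^ q)) ∘ Fin.cast hN.symm) := by
  have hk : q ≤ q + t₂ := by omega
  simp only [tensor, Function.comp_def, hη₂, Units.val_neg, Units.val_one, neg_smul, one_smul,
    neg_neg]
  congr! with i <;> rw [Fin.ext_iff] <;>
    simp only [Fin.val_castAdd, Fin.val_natAdd, Fin.val_cast, val_blockPerm, Perm.coe_one, id_eq,
      val_finRotate_pow_of_le hk] <;>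
    split_ifs <;> omega

end EtaBar

/-- For bilinear maps `η₁, η₂ : l × h → h` satisfying
`⟨{Y, Y'}, Z⟩_l = - ⟨Y', η₁(Z, Y)⟩_h = - ⟨Y, η₂(Z, Y')⟩_h`, with `η̄ᵢ(C, B) := C ∧^{ηᵢ} B`,
one has `⟨B₁ ∧^{{,}} B₂, C⟩ = (-1)^(t₁(t₂+q)+1) ⟨B₂, η̄₁(C, B₁)⟩
= (-1)^(t₂ q + 1) ⟨B₁, η̄₂(C, B₂)⟩`. -/
theorem etaBar_inner_identities {h l V : Type*}
    [AddCommGroup h] [Module ℝ h] [AddCommGroup l] [Module ℝ l]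
    [AddCommGroup V] [Module ℝ V]
    (P : h →ₗ[ℝ] h →ₗ[ℝ] l)
    (innh : h →ₗ[ℝ] h →ₗ[ℝ] ℝ) (innl : l →ₗ[ℝ] l →ₗ[ℝ] ℝ)
    (η₁ : l →ₗ[ℝ] h →ₗ[ℝ] h) (η₂ : l →ₗ[ℝ] h →ₗ[ℝ] h)
    (hη₁ : ∀ (Y Y' : h) (Z : l), innl (P Y Y') Z = - innh Y' (η₁ Z Y))
    (hη₂ : ∀ (Y Y' : h) (Z : l), innl (P Y Y') Z = - innh Y (η₂ Z Y'))
    {t₁ t₂ q : ℕ} (B₁ : AlternatingMap ℝ V h (Fin t₁))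
    (B₂ : AlternatingMap ℝ V h (Fin t₂)) (C : AlternatingMap ℝ V l (Fin q)) :
    wedge (fun Z Z' => innl Z Z') (wedge (fun Y Y' => P Y Y') ⇑B₁ ⇑B₂) ⇑C =
      ((-1 : ℝ) ^ (t₁ * (t₂ + q) + 1)) •
        reindex (by omega : t₂ + (q + t₁) = (t₁ + t₂) + q)
          (wedge (fun Y Y' => innh Y Y') ⇑B₂ (wedge (fun Z Y => η₁ Z Y) ⇑C ⇑B₁)) ∧
    wedge (fun Z Z' => innl Z Z') (wedge (fun Y Y' => P Y Y') ⇑B₁ ⇑B₂) ⇑C =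
      ((-1 : ℝ) ^ (t₂ * q + 1)) •
        reindex (by omega : t₁ + (q + t₂) = (t₁ + t₂) + q)
          (wedge (fun Y Y' => innh Y Y') ⇑B₁ (wedge (fun Z Y => η₂ Z Y) ⇑C ⇑B₂)) := by
  constructor
  · refine (wedge_wedge_eq_smul_reindex_of_tensor_eq P innl B₁ B₂ C η₁ innh B₂ C B₁ (by omega)
      (by ring) _ _
      (tensor_inner_eta₁_eq_neg_tensor_bracket P innh innl B₁ B₂ C η₁ hη₁ (by omega))).trans ?_
    congr 1
    rw [sign_finRotate_pow (m := t₁) (by omega)]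
    push_cast
    ring
  · refine (wedge_wedge_eq_smul_reindex_of_tensor_eq P innl B₁ B₂ C η₂ innh B₁ C B₂ (by omega)
      (by ring) _ _
      (tensor_inner_eta₂_eq_neg_tensor_bracket P innh innl B₁ B₂ C η₂ hη₂ (by omega))).trans ?_
    congr 1
    rw [sign_blockPerm, Perm.sign_one, one_mul, sign_finRotate_pow (m := t₂) (by omega)]
    push_cast
    ring
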